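/- Let X be a nonzero positive semidefinite 2^n × 2^n complex matrix and let s > 1. Then Ent(X^s)/τ(X^s) ≥ (ln ‖X‖_s − ln ‖X‖₁)/(1 − 1/s). -/

import Mathlib

noncomputable section

open scoped Matrix ComplexOrder

/-- The algebra of operators on `(ℂ²)^{⊗ n}`, as `2^n × 2^n` matrices indexed by `Fin n → Fin 2`. -/
abbrev Mq (n : ℕ) := Matrix (Fin n → Fin 2) (Fin n → Fin 2) ℂ

/-- Normalized trace `τ(X) = 2^{-n} tr X`. -/
def qTau {n : ℕ} (X : Mq n) : ℂ := ((2 : ℂ) ^ n)⁻¹ * X.trace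

/-- Real part of the normalized trace. -/
def qTauR {n : ℕ} (X : Mq n) : ℝ := (qTau X).re

/-- Normalized Hilbert–Schmidt inner product `⟨X, Y⟩ = τ(X† Y)`. -/
def qInner {n : ℕ} (X Y : Mq n) : ℂ := qTau (Xᴴ * Y)

/-- `|X| = √(X† X)`. -/
def mAbs {n : ℕ} (X : Mq n) : Mq n :=
  (Matrix.posSemidef_conjTranspose_mul_self X).1.eigenvectorUnitary.1 *
    Matrix.diagonal ((↑) ∘ Real.sqrt ∘ (Matrix.posSemidef_conjTranspose_mul_self X).1.eigenvalues) *
    (star (Matrix.posSemidef_conjTranspose_mul_self X).1.eigenvectorUnitary : Mq n)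

/-- The entropy `Ent(X) = τ(X ln X) − τ(X) ln τ(X)` (with the convention `0 ln 0 = 0`),
for positive semidefinite `X`, via the continuous functional calculus. -/
def mEnt {n : ℕ} (X : Mq n) : ℝ :=
  qTauR (cfc (fun x : ℝ => x * Real.log x) X) - qTauR X * Real.log (qTauR X)

/-- Real powers `X^p` of a positive semidefinite matrix, by functional calculus on the
support (`0 ^ p = 0` for `p ≠ 0`). -/
def mPow {n : ℕ} (X : Mq n) (p : ℝ) : Mq n := cfc (fun x : ℝ => x ^ p) X

/-- Normalized Schatten `p`-norm `‖X‖_p = (τ(|X|^p))^{1/p}`. -/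
def schatten {n : ℕ} (p : ℝ) (X : Mq n) : ℝ := qTauR (mPow (mAbs X) p) ^ (1 / p)

/-- Conditional expectation onto the `i`-th qubit being maximally mixed:
`E_i = I^{⊗(i-1)} ⊗ (τ(·) I) ⊗ I^{⊗(n-i)}`. -/
def condExpQ {n : ℕ} (i : Fin n) (X : Mq n) : Mq n :=
  Matrix.of fun a b =>
    if a i = b i then
      (2 : ℂ)⁻¹ * ∑ c : Fin 2, X (Function.update a i c) (Function.update b i c)
    else 0

/-- The Lindblad generator `K_n = Σ_i L̂_i`, where `L̂_i` acts as `L(X) = X − τ(X) I`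
on the `i`-th tensor factor. -/
def Kq (n : ℕ) (X : Mq n) : Mq n := ∑ i : Fin n, (X - condExpQ i X)

/-- The depolarizing channel on the `i`-th qubit:
`e^{-t} X + (1 - e^{-t}) τ_i(X) ⊗ I_i`. -/
def depolStep {n : ℕ} (t : ℝ) (i : Fin n) (X : Mq n) : Mq n :=
  (Real.exp (-t) : ℂ) • X + ((1 : ℂ) - (Real.exp (-t) : ℂ)) • condExpQ i X

/-- `Ψ_t^{⊗ n}`: the `n`-fold tensor power of the qubit depolarizing channel, i.e. the
composition over all qubits `i` of the depolarizing channel acting on the `i`-th factor. -/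
def psiDep {n : ℕ} (t : ℝ) (X : Mq n) : Mq n :=
  (List.finRange n).foldr (fun i Y => depolStep t i Y) X

/-- The binary entropy function `h(s) = −s ln s − (1−s) ln(1−s)`. -/
def binEnt (s : ℝ) : ℝ := -(s * Real.log s) - (1 - s) * Real.log (1 - s)

/-- `h⁻¹ : [0, ln 2] → [0, 1/2]`, the inverse of the restriction of the binary entropy
function to `[0, 1/2]`. -/
def binEntInv (y : ℝ) : ℝ := Function.invFunOn binEnt (Set.Icc 0 (1 / 2)) y

/-- `φ(ξ) = 1/2 − √(h⁻¹(ln 2 − ξ)(1 − h⁻¹(ln 2 − ξ)))`. -/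
def phiF (ξ : ℝ) : ℝ :=
  1 / 2 - Real.sqrt (binEntInv (Real.log 2 - ξ) * (1 - binEntInv (Real.log 2 - ξ)))

/-- `α(ξ) = φ(ξ)/ξ` for `ξ ∈ (0, ln 2]`, with `α(0) = 1/2` by continuous extension. -/
def alphaF (ξ : ℝ) : ℝ := if ξ = 0 then 1 / 2 else ξ⁻¹ * phiF ξ

/-! Diagonalising `X` reduces the claim to its eigenvalues `λᵢ` with the uniform weights `2⁻ⁿ`.
For nonnegative weights `wᵢ` and `Tₚ = ∑ wᵢ λᵢ ^ p`, the inequality is equivalent to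
`T_s (log T_s - log T_1) ≤ (s - 1) ∑ wᵢ λᵢ ^ s log λᵢ`, which is Gibbs' inequality for the
probability vectors `wᵢ λᵢ ^ s / T_s` and `wᵢ λᵢ / T_1`; it follows termwise from
`log x ≤ x - 1`. -/

open Real

lemma rpow_mul_log_add_log_le {a K s : ℝ} (ha : 0 ≤ a) (hK : 0 < K) (hs : s ≠ 0) :
    a ^ s * ((1 - s) * log a + log K) ≤ a * K - a ^ s := by
  rcases ha.eq_or_lt with rfl | ha
  · simp [zero_rpow hs]
  have hlog : (1 - s) * log a + log K = log (a ^ (1 - s) * K) := by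
    rw [log_mul (rpow_pos_of_pos ha _).ne' hK.ne', log_rpow ha]
  calc a ^ s * ((1 - s) * log a + log K)
      ≤ a ^ s * (a ^ (1 - s) * K - 1) := by
        rw [hlog]
        exact mul_le_mul_of_nonneg_left (log_le_sub_one_of_pos (by positivity)) (by positivity)
    _ = a * K - a ^ s := by
        rw [mul_sub, mul_one, ← mul_assoc, ← rpow_add ha, add_sub_cancel, rpow_one]

section Weighted

open Finset

variable {ι : Type*} [Fintype ι] {w a : ι → ℝ} {s : ℝ}

theorem mul_log_sum_rpow_sub_log_sum_le (hw : ∀ i, 0 ≤ w i) (ha : ∀ i, 0 ≤ a i)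
    (hpos : ∃ i, 0 < w i ∧ 0 < a i) (hs : s ≠ 0) :
    (∑ i, w i * a i ^ s) * (log (∑ i, w i * a i ^ s) - log (∑ i, w i * a i)) ≤
      (s - 1) * ∑ i, w i * (a i ^ s * log (a i)) := by
  obtain ⟨j, hwj, haj⟩ := hpos
  have hTs : 0 < ∑ i, w i * a i ^ s := sum_pos' (fun i _ => mul_nonneg (hw i) (rpow_nonneg (ha i) s))
    ⟨j, mem_univ j, mul_pos hwj (rpow_pos_of_pos haj s)⟩
  have hT1 : 0 < ∑ i, w i * a i := sum_pos' (fun i _ => mul_nonneg (hw i) (ha i))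
    ⟨j, mem_univ j, mul_pos hwj haj⟩
  set K := (∑ i, w i * a i ^ s) / ∑ i, w i * a i
  have key : ∑ i, w i * (a i ^ s * ((1 - s) * log (a i) + log K)) ≤
      ∑ i, w i * (a i * K - a i ^ s) :=
    sum_le_sum fun i _ =>
      mul_le_mul_of_nonneg_left (rpow_mul_log_add_log_le (ha i) (div_pos hTs hT1) hs) (hw i)
  have hlhs : ∑ i, w i * (a i ^ s * ((1 - s) * log (a i) + log K)) =
      (1 - s) * ∑ i, w i * (a i ^ s * log (a i)) + (∑ i, w i * a i ^ s) * log K := by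
    simp only [mul_add, sum_add_distrib, mul_sum, sum_mul]
    congr 1 <;> exact sum_congr rfl fun i _ => by ring
  have hrhs : ∑ i, w i * (a i * K - a i ^ s) = 0 := by
    simp only [mul_sub, sum_sub_distrib, ← mul_assoc, ← sum_mul]
    rw [mul_div_cancel₀ _ hT1.ne', sub_self]
  rw [hlhs, hrhs, log_div hTs.ne' hT1.ne'] at key
  linarith

theorem entropy_ratio_lower_bound_weighted (hw : ∀ i, 0 ≤ w i) (ha : ∀ i, 0 ≤ a i)
    (hpos : ∃ i, 0 < w i ∧ 0 < a i) (hs : 1 < s) :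
    (log ((∑ i, w i * a i ^ s) ^ (1 / s)) - log (∑ i, w i * a i)) / (1 - 1 / s) ≤
      (∑ i, w i * (a i ^ s * log (a i ^ s)) -
        (∑ i, w i * a i ^ s) * log (∑ i, w i * a i ^ s)) / ∑ i, w i * a i ^ s := by
  have hs0 : s ≠ 0 := by positivity
  obtain ⟨j, hwj, haj⟩ := hpos
  have hTs : 0 < ∑ i, w i * a i ^ s := sum_pos'
    (fun i _ => mul_nonneg (hw i) (rpow_nonneg (ha i) s))
    ⟨j, mem_univ j, mul_pos hwj (rpow_pos_of_pos haj s)⟩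
  have hlog_rpow (i : ι) : a i ^ s * log (a i ^ s) = s * (a i ^ s * log (a i)) := by
    rcases (ha i).eq_or_lt with h | h
    · simp [← h, zero_rpow hs0]
    · rw [log_rpow h]; ring
  have key := mul_log_sum_rpow_sub_log_sum_le hw ha ⟨j, hwj, haj⟩ hs0
  have hinv : s * (1 / s) = 1 := mul_one_div_cancel hs0
  have h1s : 0 < 1 - 1 / s := by rw [sub_pos, div_lt_one (by linarith)]; exact hs
  simp only [hlog_rpow, mul_left_comm _ s, ← mul_sum]
  rw [log_rpow hTs, div_le_div_iff₀ h1s hTs]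
  linear_combination key + (∑ i, w i * (a i ^ s * log (a i))) * hinv

end Weighted

section Matrix

variable {n : ℕ} {X : Mq n}

lemma qTauR_cfc (hX : X.IsHermitian) (f : ℝ → ℝ) :
    qTauR (cfc f X) = ∑ i, ((2 : ℝ) ^ n)⁻¹ * f (hX.eigenvalues i) := by
  rw [hX.cfc_eq, Matrix.IsHermitian.cfc, qTauR, qTau, Unitary.conjStarAlgAut_apply,
    Matrix.trace_mul_cycle, Unitary.coe_star_mul_self, one_mul, Matrix.trace_diagonal,
    show ((2 : ℂ) ^ n)⁻¹ = (((2 : ℝ) ^ n)⁻¹ : ℝ) by push_cast; rfl, Complex.re_ofReal_mul,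
    Complex.re_sum, Finset.mul_sum]
  rfl

open MatrixOrder in
lemma mAbs_of_posSemidef (hX : X.PosSemidef) : mAbs X = X := by
  have hsq : Xᴴ * X = X ^ 2 := by rw [hX.1.eq, sq]
  have hmAbs : mAbs X = cfc Real.sqrt (X ^ 2) := by
    rw [← hsq, (Matrix.posSemidef_conjTranspose_mul_self X).1.cfc_eq]; rfl
  rw [hmAbs, ← cfcₙ_eq_cfc,
    ← CFC.sqrt_eq_real_sqrt _ (hsq ▸ (Matrix.posSemidef_conjTranspose_mul_self X).nonneg),
    CFC.sqrt_sq X hX.nonneg]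

lemma mEnt_mPow (hX : X.IsHermitian) (s : ℝ) :
    mEnt (mPow X s) =
      ∑ i, ((2 : ℝ) ^ n)⁻¹ * (hX.eigenvalues i ^ s * log (hX.eigenvalues i ^ s)) -
        (∑ i, ((2 : ℝ) ^ n)⁻¹ * hX.eigenvalues i ^ s) *
          log (∑ i, ((2 : ℝ) ^ n)⁻¹ * hX.eigenvalues i ^ s) := by
  have hcomp : cfc (fun x : ℝ => x * log x) (mPow X s) =
      cfc ((fun x : ℝ => x * log x) ∘ (fun x : ℝ => x ^ s)) X :=
    (cfc_comp _ _ X hX ((X.finite_real_spectrum.image _).continuousOn _)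
      (X.finite_real_spectrum.continuousOn _)).symm
  rw [mEnt, hcomp, mPow, qTauR_cfc hX, qTauR_cfc hX]
  rfl

lemma Matrix.PosSemidef.exists_eigenvalues_pos (hX : X.PosSemidef) (hX0 : X ≠ 0) :
    ∃ i, 0 < hX.1.eigenvalues i := by
  by_contra! h
  exact hX0 (hX.1.eigenvalues_eq_zero_iff.mp
    (funext fun i => (h i).antisymm (hX.eigenvalues_nonneg i)))

end Matrix

/-- Lemma 1(iii) of the paper: `Ent(X^s)/τ(X^s) ≥ (ln ‖X‖_s − ln ‖X‖₁)/(1 − 1/s)`. -/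
theorem entropy_ratio_lower_bound (n : ℕ) (X : Mq n) (hX : X.PosSemidef) (hX0 : X ≠ 0)
    (s : ℝ) (hs : 1 < s) :
    (Real.log (schatten s X) - Real.log (schatten 1 X)) / (1 - 1 / s) ≤
      mEnt (mPow X s) / qTauR (mPow X s) := by
  obtain ⟨j, hj⟩ := hX.exists_eigenvalues_pos hX0
  rw [mEnt_mPow hX.1, schatten, schatten, mAbs_of_posSemidef hX, mPow, mPow, qTauR_cfc hX.1,
    qTauR_cfc hX.1]
  simp only [rpow_one, div_one]
  exact entropy_ratio_lower_bound_weighted (fun _ => by positivity) hX.eigenvalues_nonneg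
    ⟨j, by positivity, hj⟩ hs

end
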